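/- Let $n\geq 2$ and $\tilde f(y) = -\tfrac{1}{4}\ln y_1 + \sum_{k=2}^n \tfrac{y_k^2}{2y_1}$ on $\{y\in\mathbb{R}^n : y_1 > 0\}$. Then $\tilde f$ is smooth and strictly convex (its Hessian is positive definite at every point). -/

import Mathlib

noncomputable section

set_option linter.unusedSectionVars false
set_option maxHeartbeats 1000000

/-- `f̃(y) = -(1/4) ln y₁ + ∑_{k=2}^n y_k²/(2 y₁)` (index `0` plays the role of `1`). -/
def tf (n : ℕ) [NeZero n] (y : Fin n → ℝ) : ℝ :=
  -(1/4) * Real.log (y 0) + ∑ k ∈ Finset.univ \ {0}, (y k) ^ 2 / (2 * y 0)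

/-- Partial derivative in the `i`-th coordinate direction. -/
def pd (n : ℕ) (i : Fin n) (h : (Fin n → ℝ) → ℝ) : (Fin n → ℝ) → ℝ :=
  fun x => fderiv ℝ h x (Pi.single i 1)

/-- The Hessian matrix `(∂²h/∂xᵢ∂xⱼ)`. -/
def Hess (n : ℕ) (h : (Fin n → ℝ) → ℝ) (x : Fin n → ℝ) : Matrix (Fin n) (Fin n) ℝ :=
  fun i j => pd n i (pd n j h) x

namespace TfAux

variable {n : ℕ} [NeZero n]

/-- coordinate projection as a CLM -/
noncomputable def P (i : Fin n) : (Fin n → ℝ) →L[ℝ] ℝ := ContinuousLinearMap.proj i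

lemma hp (i : Fin n) (y : Fin n → ℝ) : HasFDerivAt (fun y : Fin n → ℝ => y i) (P i) y :=
  (P i).hasFDerivAt

lemma P_apply (i : Fin n) (v : Fin n → ℝ) : P i v = v i := rfl

lemma P_single (j i : Fin n) : P j (Pi.single i (1:ℝ)) = if i = j then 1 else 0 := by
  simp [P_apply, Pi.single_apply, eq_comm]

lemma sum_P_apply (c : Fin n → ℝ) (i : Fin n) :
    (∑ k ∈ Finset.univ \ {0}, c k • P k) (Pi.single i (1:ℝ)) =
      if i = 0 then 0 else c i := by
  rw [ContinuousLinearMap.sum_apply]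
  simp only [ContinuousLinearMap.smul_apply, P_apply, Pi.single_apply, smul_eq_mul, mul_ite,
    mul_one, mul_zero]
  rw [Finset.sum_ite_eq']
  by_cases hi : i = 0 <;> simp [hi]

lemma tf_eq (n : ℕ) [NeZero n] : tf n = fun y =>
    -(1/4) * Real.log (y 0) + (2⁻¹ * ∑ k ∈ Finset.univ \ {0}, (y k) ^ 2) * (y 0)⁻¹ := by
  funext y
  unfold tf
  congr 1
  rw [← Finset.sum_div]
  ring

lemma hinv (y : Fin n → ℝ) (h : 0 < y 0) :
    HasFDerivAt (fun y : Fin n → ℝ => (y 0)⁻¹) ((-((y 0) ^ 2)⁻¹) • P 0) y :=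
  (hasDerivAt_inv h.ne').comp_hasFDerivAt y (hp 0 y)

lemma hQ (y : Fin n → ℝ) : HasFDerivAt (fun y : Fin n → ℝ => ∑ k ∈ Finset.univ \ {0}, (y k) ^ 2)
    (∑ k ∈ Finset.univ \ {0}, ((2:ℝ) * y k) • P k) y :=
  HasFDerivAt.fun_sum fun k _ => by simpa [Function.comp_def] using (hasDerivAt_pow 2 (y k)).comp_hasFDerivAt y (hp k y)

lemma htf (y : Fin n → ℝ) (h : 0 < y 0) :
    HasFDerivAt (tf n)
      ((-(1/4) : ℝ) • ((y 0)⁻¹ • P 0) +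
        ((2⁻¹ * ∑ k ∈ Finset.univ \ {0}, (y k) ^ 2) • ((-((y 0) ^ 2)⁻¹) • P 0) +
          (y 0)⁻¹ • ((2⁻¹ : ℝ) • ∑ k ∈ Finset.univ \ {0}, ((2:ℝ) * y k) • P k))) y := by
  rw [tf_eq]
  exact (((Real.hasDerivAt_log h.ne').comp_hasFDerivAt y (hp 0 y)).const_mul (-(1/4) : ℝ)).add
    (((hQ y).const_mul (2⁻¹ : ℝ)).mul (hinv y h))

/-- first partial derivatives of `tf` -/
lemma pd_tf (y : Fin n → ℝ) (h : 0 < y 0) (i : Fin n) :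
    pd n i (tf n) y = if i = 0 then
      -(1/4) * (y 0)⁻¹ - 2⁻¹ * (∑ k ∈ Finset.univ \ {0}, (y k) ^ 2) * ((y 0) ^ 2)⁻¹
    else y i * (y 0)⁻¹ := by
  have H := htf y h
  unfold pd
  rw [H.fderiv]
  rcases eq_or_ne i 0 with rfl | hi
  · simp [sum_P_apply, P_single]
    ring
  · simp [sum_P_apply, P_single, hi]
    ring

/-- explicit form of `∂tf/∂y₀` -/
def g0 (n : ℕ) [NeZero n] : (Fin n → ℝ) → ℝ := fun y =>
  -(1/4) * (y 0)⁻¹ - 2⁻¹ * (∑ k ∈ Finset.univ \ {0}, (y k) ^ 2) * ((y 0) ^ 2)⁻¹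

/-- explicit form of `∂tf/∂yⱼ`, `j ≠ 0` -/
def gj (n : ℕ) [NeZero n] (j : Fin n) : (Fin n → ℝ) → ℝ := fun y => y j * (y 0)⁻¹

lemma fderiv_g0 (y : Fin n → ℝ) (h : 0 < y 0) (i : Fin n) :
    fderiv ℝ (g0 n) y (Pi.single i 1) =
      if i = 0 then 1 / (4 * (y 0) ^ 2) + (∑ k ∈ Finset.univ \ {0}, (y k) ^ 2) / (y 0) ^ 3
      else -(y i) / (y 0) ^ 2 := by
  have h0 := h.ne'
  have hsq : HasFDerivAt (fun y : Fin n → ℝ => (y 0) ^ 2) (((2:ℝ) * (y 0) ^ 1) • P 0) y :=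
    by simpa [Function.comp_def] using (hasDerivAt_pow 2 (y 0)).comp_hasFDerivAt y (hp 0 y)
  have hsqinv : HasFDerivAt (fun y : Fin n → ℝ => ((y 0) ^ 2)⁻¹)
      ((-(((y 0) ^ 2) ^ 2)⁻¹) • (((2:ℝ) * (y 0) ^ 1) • P 0)) y :=
    (hasDerivAt_inv (pow_ne_zero 2 h0)).comp_hasFDerivAt y hsq
  have H : HasFDerivAt (g0 n)
      (((-(1/4) : ℝ) • ((-((y 0) ^ 2)⁻¹) • P 0)) -
        ((2⁻¹ * ∑ k ∈ Finset.univ \ {0}, (y k) ^ 2) •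
            ((-(((y 0) ^ 2) ^ 2)⁻¹) • (((2:ℝ) * (y 0) ^ 1) • P 0)) +
          ((y 0) ^ 2)⁻¹ • ((2⁻¹ : ℝ) • ∑ k ∈ Finset.univ \ {0}, ((2:ℝ) * y k) • P k))) y :=
    (((hinv y h).const_mul (-(1/4) : ℝ)).sub (((hQ y).const_mul (2⁻¹ : ℝ)).mul hsqinv))
  rw [H.fderiv]
  rcases eq_or_ne i 0 with rfl | hi
  · simp [sum_P_apply, P_single]
    field_simp
  · simp [sum_P_apply, P_single, hi]
    field_simp

lemma fderiv_gj (j : Fin n) (y : Fin n → ℝ) (h : 0 < y 0) (i : Fin n) :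
    fderiv ℝ (gj n j) y (Pi.single i 1) =
      (if i = 0 then -(y j) / (y 0) ^ 2 else 0) + (if i = j then (y 0)⁻¹ else 0) := by
  have h0 := h.ne'
  have H : HasFDerivAt (gj n j)
      ((y j) • ((-((y 0) ^ 2)⁻¹) • P 0) + (y 0)⁻¹ • P j) y :=
    (hp j y).mul (hinv y h)
  rw [H.fderiv]
  simp only [ContinuousLinearMap.add_apply, ContinuousLinearMap.smul_apply, P_apply, smul_eq_mul]
  rcases eq_or_ne i 0 with rfl | hi
  · rcases eq_or_ne j 0 with rfl | hj
    · simp [Pi.single_apply]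
      field_simp
    · simp [Pi.single_apply, hj, Ne.symm hj]
      field_simp
  · rcases eq_or_ne i j with rfl | hij
    · simp [Pi.single_apply, hi, Ne.symm hi]
    · simp [Pi.single_apply, hi, Ne.symm hi, hij, Ne.symm hij]

lemma isOpenU (n : ℕ) [NeZero n] : IsOpen {y : Fin n → ℝ | 0 < y 0} :=
  isOpen_lt continuous_const (continuous_apply 0)

lemma hess_apply (y : Fin n → ℝ) (h : 0 < y 0) (i j : Fin n) :
    Hess n (tf n) y i j =
      if j = 0 then
        (if i = 0 then 1 / (4 * (y 0) ^ 2) + (∑ k ∈ Finset.univ \ {0}, (y k) ^ 2) / (y 0) ^ 3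
         else -(y i) / (y 0) ^ 2)
      else ((if i = 0 then -(y j) / (y 0) ^ 2 else 0) + (if i = j then (y 0)⁻¹ else 0)) := by
  have hmem := (isOpenU n).mem_nhds (by exact h)
  rcases eq_or_ne j 0 with rfl | hj
  · have hev : pd n 0 (tf n) =ᶠ[nhds y] g0 n :=
      Filter.eventuallyEq_of_mem hmem (fun x hx => by
        simpa [g0] using pd_tf x hx 0)
    show pd n i (pd n 0 (tf n)) y = _
    rw [show pd n i (pd n 0 (tf n)) y = fderiv ℝ (pd n 0 (tf n)) y (Pi.single i 1) from rfl,
      hev.fderiv_eq]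
    simpa using fderiv_g0 y h i
  · have hev : pd n j (tf n) =ᶠ[nhds y] gj n j :=
      Filter.eventuallyEq_of_mem hmem (fun x hx => by
        simpa [gj, if_neg hj] using pd_tf x hx j)
    show pd n i (pd n j (tf n)) y = _
    rw [show pd n i (pd n j (tf n)) y = fderiv ℝ (pd n j (tf n)) y (Pi.single i 1) from rfl,
      hev.fderiv_eq, if_neg hj]
    exact fderiv_gj j y h i

lemma sum_split (f : Fin n → ℝ) : ∑ i, f i = f 0 + ∑ i ∈ Finset.univ \ {0}, f i := by
  rw [Finset.sdiff_singleton_eq_erase, add_comm, Finset.sum_erase_add]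
  exact Finset.mem_univ 0

end TfAux

open TfAux in
/-- `f̃` is smooth and strictly convex (positive definite Hessian) on `{y₁ > 0}`. -/
theorem tf_smooth_strictly_convex (n : ℕ) [NeZero n] (hn : 2 ≤ n) :
    ContDiffOn ℝ (⊤ : ℕ∞) (tf n) {y : Fin n → ℝ | 0 < y 0} ∧
    ∀ y : Fin n → ℝ, 0 < y 0 → (Hess n (tf n) y).PosDef := by
  constructor
  · -- smoothness
    unfold tf
    apply ContDiffOn.add
    · exact ContDiffOn.mul contDiffOn_const
        ((((ContinuousLinearMap.proj 0 : (Fin n → ℝ) →L[ℝ] ℝ).contDiff).contDiffOn).log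
          (fun x hx => ne_of_gt hx))
    · apply ContDiffOn.sum
      intro k _
      apply ContDiffOn.div
      · exact (((ContinuousLinearMap.proj k : (Fin n → ℝ) →L[ℝ] ℝ).contDiff).pow 2).contDiffOn
      · exact contDiffOn_const.mul
          ((ContinuousLinearMap.proj 0 : (Fin n → ℝ) →L[ℝ] ℝ).contDiff).contDiffOn
      · intro x hx
        have : (0:ℝ) < x 0 := hx
        positivity
  · intro y h
    have h0 : y 0 ≠ 0 := h.ne'
    refine Matrix.posDef_iff_dotProduct_mulVec.mpr ⟨?_, ?_⟩
    · -- Hermitian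
      ext i j
      simp only [Matrix.conjTranspose_apply, star_trivial]
      rw [hess_apply y h i j, hess_apply y h j i]
      by_cases hi : i = 0 <;> by_cases hj : j = 0 <;> by_cases hij : i = j <;>
        simp_all [eq_comm]
    · -- positive definiteness
      intro x hx
      have key : dotProduct (star x) (Matrix.mulVec (Hess n (tf n) y) x) =
          x 0 ^ 2 / (4 * (y 0) ^ 2) +
            ((y 0) ^ 2 * (∑ k ∈ Finset.univ \ {0}, (x k) ^ 2) -
              2 * (y 0) * (x 0) * (∑ k ∈ Finset.univ \ {0}, y k * x k) +
              (x 0) ^ 2 * (∑ k ∈ Finset.univ \ {0}, (y k) ^ 2)) / (y 0) ^ 3 := by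
        have hrow0 : ∀ j : Fin n, Hess n (tf n) y 0 j =
            if j = 0 then 1 / (4 * (y 0) ^ 2) +
              (∑ k ∈ Finset.univ \ {0}, (y k) ^ 2) / (y 0) ^ 3
            else -(y j) / (y 0) ^ 2 := by
          intro j
          rw [hess_apply y h 0 j]
          rcases eq_or_ne j 0 with rfl | hj
          · simp
          · simp [hj, Ne.symm hj]
        have hrowi : ∀ i : Fin n, i ≠ 0 → ∀ j : Fin n, Hess n (tf n) y i j =
            if j = 0 then -(y i) / (y 0) ^ 2 else (if i = j then (y 0)⁻¹ else 0) := by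
          intro i hi j
          rw [hess_apply y h i j]
          rcases eq_or_ne j 0 with rfl | hj
          · simp [hi]
          · simp [hi, hj]
        simp only [dotProduct, Matrix.mulVec, Pi.star_apply, star_trivial]
        have inner0 : (∑ j, Hess n (tf n) y 0 j * x j) =
            (1 / (4 * (y 0) ^ 2) + (∑ k ∈ Finset.univ \ {0}, (y k) ^ 2) / (y 0) ^ 3) * x 0 +
              (-(((y 0) ^ 2)⁻¹)) * (∑ k ∈ Finset.univ \ {0}, y k * x k) := by
          rw [sum_split (fun j => Hess n (tf n) y 0 j * x j)]
          congr 1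
          · rw [hrow0 0, if_pos rfl]
          · rw [Finset.mul_sum]
            apply Finset.sum_congr rfl
            intro k hk
            have hk0 : k ≠ 0 := by
              simpa using (Finset.mem_sdiff.mp hk).2
            rw [hrow0 k, if_neg hk0]
            ring
        have inneri : ∀ i : Fin n, i ≠ 0 → (∑ j, Hess n (tf n) y i j * x j) =
            -(y i) / (y 0) ^ 2 * x 0 + x i * (y 0)⁻¹ := by
          intro i hi
          rw [sum_split (fun j => Hess n (tf n) y i j * x j)]
          rw [hrowi i hi 0, if_pos rfl]
          congr 1
          have hsum : ∀ j ∈ Finset.univ \ ({0} : Finset (Fin n)),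
              Hess n (tf n) y i j * x j = (if j = i then (y 0)⁻¹ * x j else 0) := by
            intro j hj
            have hj0 : j ≠ 0 := by simpa using (Finset.mem_sdiff.mp hj).2
            rw [hrowi i hi j, if_neg hj0]
            rcases eq_or_ne i j with rfl | hij
            · simp
            · simp [hij, Ne.symm hij]
          rw [Finset.sum_congr rfl hsum, Finset.sum_ite_eq']
          simp [hi, mul_comm]
        rw [sum_split (fun i => x i * ∑ j, Hess n (tf n) y i j * x j), inner0]
        have step2 : ∑ i ∈ Finset.univ \ {0}, x i * (∑ j, Hess n (tf n) y i j * x j) =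
            (-(x 0) * ((y 0) ^ 2)⁻¹) * (∑ k ∈ Finset.univ \ {0}, y k * x k) +
              (y 0)⁻¹ * (∑ k ∈ Finset.univ \ {0}, (x k) ^ 2) := by
          rw [Finset.mul_sum, Finset.mul_sum, ← Finset.sum_add_distrib]
          apply Finset.sum_congr rfl
          intro i hi
          have hi0 : i ≠ 0 := by simpa using (Finset.mem_sdiff.mp hi).2
          rw [inneri i hi0]
          ring
        rw [step2]
        field_simp
        ring
      rw [key]
      rcases eq_or_ne (x 0) 0 with hx0 | hx0
      · -- x 0 = 0 : the sum part is positive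
        obtain ⟨i, hi⟩ : ∃ i, x i ≠ 0 := Function.ne_iff.mp hx
        have hi0 : i ≠ 0 := fun hc => hi (hc ▸ hx0)
        have hterm : 0 < (y 0) ^ 2 * (∑ k ∈ Finset.univ \ {0}, (x k) ^ 2) := by
          apply mul_pos (pow_pos h 2)
          apply Finset.sum_pos' (fun k _ => sq_nonneg _)
          exact ⟨i, by simp [hi0], by positivity⟩
        have h1 : 0 ≤ x 0 ^ 2 / (4 * (y 0) ^ 2) := by positivity
        have h2 : (0:ℝ) < ((y 0) ^ 2 * (∑ k ∈ Finset.univ \ {0}, (x k) ^ 2) -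
            2 * (y 0) * (x 0) * (∑ k ∈ Finset.univ \ {0}, y k * x k) +
            (x 0) ^ 2 * (∑ k ∈ Finset.univ \ {0}, (y k) ^ 2)) / (y 0) ^ 3 := by
          apply div_pos _ (pow_pos h 3)
          rw [hx0]
          simpa using hterm
        linarith
      · -- x 0 ≠ 0 : the first part is positive
        have h1 : 0 < x 0 ^ 2 / (4 * (y 0) ^ 2) := by positivity
        have h2 : (0:ℝ) ≤ ((y 0) ^ 2 * (∑ k ∈ Finset.univ \ {0}, (x k) ^ 2) -
            2 * (y 0) * (x 0) * (∑ k ∈ Finset.univ \ {0}, y k * x k) +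
            (x 0) ^ 2 * (∑ k ∈ Finset.univ \ {0}, (y k) ^ 2)) / (y 0) ^ 3 := by
          apply div_nonneg _ (le_of_lt (pow_pos h 3))
          have : (y 0) ^ 2 * (∑ k ∈ Finset.univ \ {0}, (x k) ^ 2) -
              2 * (y 0) * (x 0) * (∑ k ∈ Finset.univ \ {0}, y k * x k) +
              (x 0) ^ 2 * (∑ k ∈ Finset.univ \ {0}, (y k) ^ 2) =
              ∑ k ∈ Finset.univ \ {0}, (y 0 * x k - x 0 * y k) ^ 2 := by
            rw [Finset.mul_sum, Finset.mul_sum, Finset.mul_sum, ← Finset.sum_sub_distrib,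
              ← Finset.sum_add_distrib]
            apply Finset.sum_congr rfl
            intro k _
            ring
          rw [this]
          exact Finset.sum_nonneg fun k _ => sq_nonneg _
        linarith
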